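/- arXiv:1410.4533 — 5 statements merged into one kernel-verified Lean document; each statement's English description precedes it below -/
import Mathlib

section
/- Let o be a commutative ring, n a natural number, and (n_1,...,n_r) a composition of n. Let A = diag(A_1,...,A_r) and A' = diag(A_1',...,A_r') be block diagonal n×n matrices over o/p^ℓ (with p a maximal ideal and ℓ ≥ 1) whose blocks satisfy A_i ≡ a_i·Id and A_i' ≡ a_i·Id modulo p, where the a_i are pairwise non-congruent modulo p. If X is an n×n matrix over o/p^ℓ with XA = A'X, then X is block diagonal, X = diag(X_1,...,X_r), with X_i A_i = A_i' X_i for each i. -/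
open Matrix

/-- Auxiliary: if `Y * B = B' * Y`, `B ≡ b•1` and `B' ≡ b'•1` modulo an ideal `I` with
`I ^ ℓ = ⊥`, and `b - b'` is a unit, then `Y = 0`. -/
lemma aux_offdiag_zero {R : Type*} [CommRing R] (I : Ideal R) (ℓ : ℕ) (hI : I ^ ℓ = ⊥)
    {m1 m2 : ℕ} (B' : Matrix (Fin m1) (Fin m1) R) (B : Matrix (Fin m2) (Fin m2) R)
    (b b' : R) (hB : ∀ k l, (B - b • 1) k l ∈ I) (hB' : ∀ k l, (B' - b' • 1) k l ∈ I)
    (hu : IsUnit (b - b'))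
    (Y : Matrix (Fin m1) (Fin m2) R) (hY : Y * B = B' * Y) : Y = 0 := by
  have hrel' : (b - b') • Y = (B' - b' • 1) * Y - Y * (B - b • 1) := by
    rw [Matrix.mul_sub, Matrix.sub_mul, hY, sub_smul]
    simp only [Matrix.smul_mul, Matrix.mul_smul, Matrix.one_mul, Matrix.mul_one]
    abel
  have key : ∀ k : ℕ, ∀ s t, Y s t ∈ I ^ k := by
    intro k
    induction k with
    | zero => simp
    | succ k ih =>
      intro s t
      have h1 : ((b - b') • Y) s t ∈ I ^ (k + 1) := by
        rw [hrel', Matrix.sub_apply, Matrix.mul_apply, Matrix.mul_apply]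
        refine sub_mem (Ideal.sum_mem _ fun m _ => ?_) (Ideal.sum_mem _ fun m _ => ?_)
        · rw [pow_succ']
          exact Ideal.mul_mem_mul (hB' s m) (ih m t)
        · rw [pow_succ]
          exact Ideal.mul_mem_mul (ih s m) (hB m t)
      have h2 : (b - b') * Y s t ∈ I ^ (k + 1) := by
        simpa [Matrix.smul_apply, smul_eq_mul] using h1
      have h3 := Ideal.mul_mem_left _ (↑hu.unit⁻¹ : R) h2
      rwa [← mul_assoc, IsUnit.val_inv_mul, one_mul] at h3
  ext s t
  have := key ℓ s t
  rw [hI] at this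
  simpa using this

/-- **Block diagonal centralizer lemma.**
Let `o` be a commutative ring, `p` a maximal ideal, `ℓ ≥ 1`, and `(n 0, ..., n (r-1))` a
composition of `n`.  Let `A = blockDiagonal' A_i` and `A' = blockDiagonal' A'_i` be block
diagonal matrices over `o ⧸ p ^ ℓ` whose blocks satisfy `A_i ≡ a_i • 1` and `A'_i ≡ a_i • 1`
modulo `p` (via the canonical map `φ : o ⧸ p ^ ℓ → o ⧸ p`), where the `a_i` are pairwise
non-congruent modulo `p`.  If `X * A = A' * X` then `X` is block diagonal,
`X = blockDiagonal' Xb`, with `Xb i * A i = A' i * Xb i` for each `i`. -/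
theorem block_diagonal_of_commute
    (o : Type*) [CommRing o] (p : Ideal o) (hp : p.IsMaximal)
    (ℓ : ℕ) (hℓ : 1 ≤ ℓ)
    (φ : (o ⧸ p ^ ℓ) →+* (o ⧸ p))
    (hφ : ∀ x : o, φ (Ideal.Quotient.mk (p ^ ℓ) x) = Ideal.Quotient.mk p x)
    (r : ℕ) (n : Fin r → ℕ)
    (A A' : ∀ i : Fin r, Matrix (Fin (n i)) (Fin (n i)) (o ⧸ p ^ ℓ))
    (a : Fin r → (o ⧸ p ^ ℓ))
    (hA : ∀ i, (A i).map φ = φ (a i) • (1 : Matrix (Fin (n i)) (Fin (n i)) (o ⧸ p)))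
    (hA' : ∀ i, (A' i).map φ = φ (a i) • (1 : Matrix (Fin (n i)) (Fin (n i)) (o ⧸ p)))
    (ha : ∀ i j : Fin r, i ≠ j → φ (a i) ≠ φ (a j))
    (X : Matrix (Σ i, Fin (n i)) (Σ i, Fin (n i)) (o ⧸ p ^ ℓ))
    (hX : X * Matrix.blockDiagonal' A = Matrix.blockDiagonal' A' * X) :
    ∃ Xb : ∀ i : Fin r, Matrix (Fin (n i)) (Fin (n i)) (o ⧸ p ^ ℓ),
      X = Matrix.blockDiagonal' Xb ∧ ∀ i, Xb i * A i = A' i * Xb i := by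
  classical
  set I : Ideal (o ⧸ p ^ ℓ) := p.map (Ideal.Quotient.mk (p ^ ℓ)) with hIdef
  have hsurj : Function.Surjective (Ideal.Quotient.mk (p ^ ℓ)) := Ideal.Quotient.mk_surjective
  -- membership in I is detected by φ
  have hker : ∀ x : o ⧸ p ^ ℓ, x ∈ I ↔ φ x = 0 := by
    intro x
    obtain ⟨y, rfl⟩ := hsurj x
    rw [hφ]
    constructor
    · intro hx
      rw [hIdef, Ideal.mem_map_iff_of_surjective _ hsurj] at hx
      obtain ⟨y', hy', hyy⟩ := hx
      have hsub : y' - y ∈ p ^ ℓ := (Ideal.Quotient.eq (I := p ^ ℓ)).mp hyy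
      have hsub' : y' - y ∈ p := Ideal.pow_le_self (by omega) hsub
      have : y = y' - (y' - y) := by ring
      rw [Ideal.Quotient.eq_zero_iff_mem]
      rw [this]
      exact sub_mem hy' hsub'
    · intro hy
      rw [Ideal.Quotient.eq_zero_iff_mem] at hy
      exact Ideal.mem_map_of_mem _ hy
  -- I is nilpotent of order ℓ
  have hIl : I ^ ℓ = ⊥ := by
    rw [hIdef, ← Ideal.map_pow, Ideal.map_quotient_self]
  -- elements with nonzero image under φ are units
  have hunit : ∀ x : o ⧸ p ^ ℓ, φ x ≠ 0 → IsUnit x := by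
    intro x hx
    have hfield : IsField (o ⧸ p) := (Ideal.Quotient.maximal_ideal_iff_isField_quotient p).mp hp
    letI := hfield.toField
    have hφsurj : Function.Surjective φ := by
      intro z
      obtain ⟨y, rfl⟩ := Ideal.Quotient.mk_surjective z
      exact ⟨Ideal.Quotient.mk (p ^ ℓ) y, hφ y⟩
    obtain ⟨v, hv⟩ := hφsurj (φ x)⁻¹
    have hm : x * v - 1 ∈ I := by
      rw [hker]
      rw [_root_.map_sub, _root_.map_mul, hv, _root_.map_one, mul_inv_cancel₀ hx, sub_self]
    have hnil : IsNilpotent (x * v - 1) := by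
      refine ⟨ℓ, ?_⟩
      have := Ideal.pow_mem_pow hm ℓ
      rw [hIl] at this
      simpa using this
    have : IsUnit (x * v) := by
      have := hnil.isUnit_one_add
      rwa [add_sub_cancel] at this
    exact isUnit_of_mul_isUnit_left this
  -- the blocks are scalar mod I
  have hblk : ∀ (i : Fin r) (k l : Fin (n i)), (A i - a i • 1) k l ∈ I := by
    intro i k l
    rw [hker]
    have := congrFun (congrFun (hA i) k) l
    simp only [Matrix.map_apply] at this
    simp only [Matrix.sub_apply, _root_.map_sub, this, Matrix.smul_apply, Matrix.one_apply,
      smul_eq_mul, apply_ite φ, _root_.map_mul, _root_.map_one, _root_.map_zero]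
    split <;> simp
  have hblk' : ∀ (i : Fin r) (k l : Fin (n i)), (A' i - a i • 1) k l ∈ I := by
    intro i k l
    rw [hker]
    have := congrFun (congrFun (hA' i) k) l
    simp only [Matrix.map_apply] at this
    simp only [Matrix.sub_apply, _root_.map_sub, this, Matrix.smul_apply, Matrix.one_apply,
      smul_eq_mul, apply_ite φ, _root_.map_mul, _root_.map_one, _root_.map_zero]
    split <;> simp
  -- entrywise multiplication formulas
  have hmulA : ∀ (i j : Fin r) (k : Fin (n i)) (l : Fin (n j)),
      (X * Matrix.blockDiagonal' A) ⟨i, k⟩ ⟨j, l⟩ = ∑ m, X ⟨i, k⟩ ⟨j, m⟩ * A j m l := by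
    intro i j k l
    rw [Matrix.mul_apply, ← Finset.univ_sigma_univ, Finset.sum_sigma]
    rw [Finset.sum_eq_single j]
    · simp
    · intro j' _ hj'
      simp [Matrix.blockDiagonal'_apply_ne _ _ _ hj']
    · simp
  have hmulA' : ∀ (i j : Fin r) (k : Fin (n i)) (l : Fin (n j)),
      (Matrix.blockDiagonal' A' * X) ⟨i, k⟩ ⟨j, l⟩ = ∑ m, A' i k m * X ⟨i, m⟩ ⟨j, l⟩ := by
    intro i j k l
    rw [Matrix.mul_apply, ← Finset.univ_sigma_univ, Finset.sum_sigma]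
    rw [Finset.sum_eq_single i]
    · simp
    · intro i' _ hi'
      simp [Matrix.blockDiagonal'_apply_ne _ _ _ (Ne.symm hi')]
    · simp
  -- off-diagonal blocks vanish
  have hoffdiag : ∀ (i j : Fin r), i ≠ j → ∀ (k : Fin (n i)) (l : Fin (n j)),
      X ⟨i, k⟩ ⟨j, l⟩ = 0 := by
    intro i j hij k l
    set Y : Matrix (Fin (n i)) (Fin (n j)) (o ⧸ p ^ ℓ) :=
      Matrix.of fun k l => X ⟨i, k⟩ ⟨j, l⟩ with hYdef
    have hYcomm : Y * A j = A' i * Y := by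
      ext k' l'
      rw [Matrix.mul_apply, Matrix.mul_apply]
      have h1 := hmulA i j k' l'
      have h2 := hmulA' i j k' l'
      rw [hX] at h1
      simpa [hYdef] using h1.symm.trans h2
    have hud : IsUnit (a j - a i) := by
      apply hunit
      rw [map_sub, sub_ne_zero]
      exact ha j i (Ne.symm hij)
    have hY0 : Y = 0 :=
      aux_offdiag_zero I ℓ hIl (A' i) (A j) (a j) (a i) (hblk j) (hblk' i) hud Y hYcomm
    have := congrFun (congrFun hY0 k) l
    simpa [hYdef] using this
  -- define the diagonal blocks
  refine ⟨fun i => Matrix.of fun k l => X ⟨i, k⟩ ⟨i, l⟩, ?_, ?_⟩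
  · ext ⟨i, k⟩ ⟨j, l⟩
    rcases eq_or_ne i j with rfl | hij
    · simp
    · rw [Matrix.blockDiagonal'_apply_ne _ _ _ hij]
      exact hoffdiag i j hij k l
  · intro i
    ext k l
    rw [Matrix.mul_apply, Matrix.mul_apply]
    have h1 := hmulA i i k l
    have h2 := hmulA' i i k l
    rw [hX] at h1
    simpa using h1.symm.trans h2
end

section
/- Let o be a compact discrete valuation ring of residue characteristic p ≠ 2, and O an unramified quadratic extension of o with the nontrivial Galois involution x ↦ x°, extended to conjugate-transpose A ↦ A° on n×n matrices. If Γ ∈ GL_n(O) satisfies Γ° = Γ (i.e., Γ is hermitian), then there exists g ∈ GL_n(O) such that Γ = g° g. Conversely, any matrix of the form g° g with g invertible is hermitian. -/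
/-!
Over the residue field the norm `x ↦ x° x` of the quadratic extension `k₂/k` is onto `k×`.
Since `2` is a unit, Hensel's lemma for `X² - u` lifts this: if `c₀° c₀ ≡ a` for a `°`-fixed
unit `a`, then `a = c₀° c₀ u` with `u ≡ 1`, and the square root `r ≡ 1` of `u` is `°`-fixed,
so `a = (c₀ r)° (c₀ r)`. A hermitian `Γ ∈ GL_n(O)` has, after a transvection, a unit diagonal
entry: otherwise some `Γᵢⱼ` is a unit and `(eᵢ + b eⱼ)° Γ (eᵢ + b eⱼ) ≡ 2` for `b = Γᵢⱼ⁻¹`.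
Writing that entry as `c° c` and splitting it off with its Schur complement, induction on `n`
finishes.
-/

open Matrix Polynomial IsLocalRing

theorem FiniteField.exists_apply_mul_self_eq {K : Type*} [Field K] [Finite K]
    (τ : K ≃+* K) (hτ : orderOf τ = 2) {a : K} (ha : τ a = a) : ∃ c, τ c * c = a := by
  let G := Subgroup.zpowers τ
  have : Finite (K ≃+* K) := Finite.of_injective _ DFunLike.coe_injective
  have haF : a ∈ FixedPoints.subfield G K := fun g =>
    (Subgroup.zpowers_le (H := MulAction.stabilizer (K ≃+* K) a)).mpr ha g.2
  -- `τ` generates the Galois group of `K` over its fixed field, so `τ c * c` is the norm of `c`.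
  obtain ⟨c, hc⟩ := FiniteField.norm_surjective (FixedPoints.subfield G K) K ⟨a, haF⟩
  refine ⟨c, ?_⟩
  have hG : ∀ g : G, g = 1 ∨ g = ⟨τ, Subgroup.mem_zpowers τ⟩ := by
    rintro ⟨g, k, rfl⟩
    rcases Int.emod_two_eq_zero_or_one k with hk | hk <;>
      simp [Subtype.ext_iff, ← zpow_mod_orderOf, hτ, hk]
  have hne : (1 : G) ≠ ⟨τ, Subgroup.mem_zpowers τ⟩ := by
    rintro ⟨⟩
    simp at hτ
  have := Fintype.ofFinite G
  calc τ c * c = ∏ g : G, g • c := by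
        rw [Fintype.prod_eq_mul _ _ hne.symm
          (fun g hg => (hG g).elim (absurd · hg.2) (absurd · hg.1))]
        rfl
    _ = ∏ φ : Gal(K/FixedPoints.subfield G K), φ c :=
        Fintype.prod_equiv (FixedPoints.toAlgAutMulEquiv G K).toEquiv _ _ fun g => rfl
    _ = a := by rw [← Algebra.norm_eq_prod_automorphisms, hc]; rfl

theorem HenselianRing.exists_sq_eq_of_sub_one_mem {R : Type*} [CommRing R] {I : Ideal R}
    [HenselianRing R I] (h2 : IsUnit (2 : R)) {u : R} (hu : u - 1 ∈ I) :
    ∃ r, r ^ 2 = u ∧ r - 1 ∈ I := by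
  have heval : (X ^ 2 - C u).eval 1 ∈ I := by
    rw [eval_sub, eval_pow, eval_X, eval_C, one_pow, ← neg_sub]
    exact I.neg_mem hu
  have hderiv : IsUnit (Ideal.Quotient.mk I ((X ^ 2 - C u).derivative.eval 1)) := by
    rw [derivative_sub, derivative_C, sub_zero, derivative_X_pow]
    simpa using h2.map (Ideal.Quotient.mk I)
  obtain ⟨r, hr, hr1⟩ :=
    HenselianRing.is_henselian _ (monic_X_pow_sub_C u two_ne_zero) 1 heval hderiv
  exact ⟨r, by simpa [sub_eq_zero] using hr, hr1⟩

namespace IsLocalRing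

variable {R : Type*} [CommRing R] [IsLocalRing R]

theorem isUnit_add_of_mem_maximalIdeal {a b : R} (ha : IsUnit a) (hb : b ∈ maximalIdeal R) :
    IsUnit (a + b) :=
  (isUnit_or_isUnit_of_isUnit_add (b := -b) (by simpa using ha)).resolve_right
    (by simpa [mem_maximalIdeal, mem_nonunits_iff] using hb)

variable [StarRing R]

theorem star_mem_maximalIdeal {x : R} (hx : x ∈ maximalIdeal R) : star x ∈ maximalIdeal R := by
  simpa [mem_maximalIdeal, mem_nonunits_iff] using hx

theorem exists_star_mul_self_eq_of_sub_mem [HenselianRing R (maximalIdeal R)]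
    (h2 : IsUnit (2 : R)) {a c₀ : R} (ha : IsUnit a) (hsa : star a = a)
    (hc₀ : star c₀ * c₀ - a ∈ maximalIdeal R) : ∃ c, star c * c = a := by
  set n₀ := star c₀ * c₀
  have hn₀ : IsUnit n₀ := by simpa using isUnit_add_of_mem_maximalIdeal ha hc₀
  obtain ⟨r, hr, hr1⟩ := HenselianRing.exists_sq_eq_of_sub_one_mem h2 (u := ↑hn₀.unit⁻¹ * a) <| by
    rw [← hn₀.unit.inv_mul, ← mul_sub, ← neg_sub]
    exact Ideal.mul_mem_left _ _ (neg_mem hc₀)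
  have hnr : n₀ * r ^ 2 = a := by rw [hr, ← mul_assoc, IsUnit.mul_val_inv, one_mul]
  have hsr : star r = r := by
    have hsq : star r ^ 2 = r ^ 2 := hn₀.mul_left_cancel <| by
      have := congrArg star hnr
      rwa [star_mul, star_pow, hsa, mul_comm, (IsSelfAdjoint.star_mul_self c₀).star_eq, ← hnr]
        at this
    -- `star r + r ≡ 2` is a unit, so `(star r - r) * (star r + r) = 0` forces `star r = r`.
    have hunit : IsUnit (star r + r) := by
      have := isUnit_add_of_mem_maximalIdeal h2
        (add_mem (star_mem_maximalIdeal hr1) hr1)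
      rwa [star_sub, star_one, show (2 : R) + (star r - 1 + (r - 1)) = star r + r by ring] at this
    exact sub_eq_zero.mp <| hunit.mul_left_eq_zero.mp (by linear_combination hsq)
  exact ⟨c₀ * r, by rw [star_mul, hsr, ← hnr]; ring⟩

theorem exists_star_mul_self_eq [HenselianRing R (maximalIdeal R)] [Finite (ResidueField R)]
    (h2 : IsUnit (2 : R)) (hres : ∃ x : R, residue R (star x) ≠ residue R x)
    {a : R} (ha : IsUnit a) (hsa : star a = a) : ∃ c, star c * c = a := by
  let τ := ResidueField.mapAut (starRingAut : RingAut R)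
  have hτ : orderOf τ = 2 := by
    refine orderOf_eq_prime ?_ fun h => ?_
    · rw [← map_pow]
      convert map_one ResidueField.mapAut
      exact RingEquiv.ext star_star
    · obtain ⟨x, hx⟩ := hres
      exact hx (DFunLike.congr_fun h (residue R x))
  obtain ⟨c, hc⟩ := FiniteField.exists_apply_mul_self_eq τ hτ (a := residue R a) (congrArg _ hsa)
  obtain ⟨c₀, rfl⟩ := residue_surjective c
  refine exists_star_mul_self_eq_of_sub_mem h2 ha hsa (c₀ := c₀) ?_
  rw [← residue_eq_zero_iff, map_sub, map_mul, sub_eq_zero]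
  exact hc

end IsLocalRing

abbrev RingEquiv.starRingOfInvolutive {R : Type*} [CommRing R] (σ : R ≃+* R)
    (hσ : Function.Involutive σ) : StarRing R where
  star := σ
  star_involutive := hσ
  star_mul x y := by rw [map_mul, mul_comm]
  star_add := map_add σ

namespace Matrix

variable {R : Type*} [CommRing R]

theorem exists_isUnit_apply_of_isUnit [IsLocalRing R] {n : Type*} [Fintype n] [DecidableEq n]
    {Γ : Matrix n n R} (hΓ : IsUnit Γ) (i : n) : ∃ j, IsUnit (Γ i j) := by
  by_contra! h
  have hmem : (Γ * Γ⁻¹) i i ∈ maximalIdeal R := Ideal.sum_mem _ fun j _ =>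
    Ideal.mul_mem_right _ _ ((mem_maximalIdeal _).mpr (h j))
  rw [mul_nonsing_inv _ ((isUnit_iff_isUnit_det Γ).mp hΓ), one_apply_eq] at hmem
  exact (maximalIdeal.isMaximal R).ne_top ((Ideal.eq_top_iff_one _).mpr hmem)

variable [StarRing R]

theorem conjTranspose_transvection {n : Type*} [DecidableEq n] (i j : n) (c : R) :
    (transvection i j c)ᴴ = transvection j i (star c) := by
  rw [transvection, transvection, conjTranspose_add, conjTranspose_one, conjTranspose_single]

theorem exists_eq_conjTranspose_mul_self_of_conjTranspose_mul_mul {n : Type*} [Fintype n]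
    [DecidableEq n] {Γ P : Matrix n n R} (hP : IsUnit P) :
    (∃ g, Pᴴ * Γ * P = gᴴ * g) → ∃ g, Γ = gᴴ * g := by
  rintro ⟨g, h⟩
  refine ⟨g * P⁻¹, ?_⟩
  have hPP : P * P⁻¹ = 1 := mul_nonsing_inv P ((isUnit_iff_isUnit_det P).mp hP)
  calc Γ = (P * P⁻¹)ᴴ * Γ * (P * P⁻¹) := by
        rw [hPP, conjTranspose_one, Matrix.one_mul, Matrix.mul_one]
    _ = (P⁻¹)ᴴ * (Pᴴ * Γ * P) * P⁻¹ := by rw [conjTranspose_mul]; noncomm_ring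
    _ = (g * P⁻¹)ᴴ * (g * P⁻¹) := by rw [h, conjTranspose_mul]; noncomm_ring

theorem exists_eq_conjTranspose_mul_self_of_submatrix {m n : Type*} [Fintype m] [Fintype n]
    {Γ : Matrix n n R} (e : m ≃ n) :
    (∃ g, Γ.submatrix e e = gᴴ * g) → ∃ g, Γ = gᴴ * g := by
  rintro ⟨g, h⟩
  refine ⟨g.submatrix e.symm e.symm, ?_⟩
  rw [conjTranspose_submatrix, submatrix_mul_equiv, ← h, submatrix_submatrix]
  simp

theorem fromBlocks_eq_conjTranspose_mul_self {m n : Type*} [Fintype m] [DecidableEq m]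
    [Fintype n] {a : Matrix m m R} (ha : IsUnit a) (B : Matrix m n R) (D h : Matrix n n R)
    (hS : D - Bᴴ * (aᴴ * a)⁻¹ * B = hᴴ * h) :
    fromBlocks (aᴴ * a) B Bᴴ D =
      (fromBlocks a (aᴴ⁻¹ * B) 0 h)ᴴ * fromBlocks a (aᴴ⁻¹ * B) 0 h := by
  have ha' : IsUnit a.det := (isUnit_iff_isUnit_det a).mp ha
  have hinv : aᴴ * aᴴ⁻¹ = 1 := mul_nonsing_inv _ (by rwa [det_conjTranspose, isUnit_star])
  rw [fromBlocks_conjTranspose, fromBlocks_multiply, ← hS, mul_inv_rev]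
  simp only [conjTranspose_zero, conjTranspose_mul, conjTranspose_nonsing_inv,
    conjTranspose_conjTranspose, Matrix.zero_mul, Matrix.mul_zero, add_zero]
  congr 1
  · rw [← Matrix.mul_assoc, hinv, Matrix.one_mul]
  · rw [Matrix.mul_assoc, nonsing_inv_mul _ ha', Matrix.mul_one]
  · simp only [Matrix.mul_assoc, add_sub_cancel]

theorem exists_isUnit_conjTranspose_mul_mul_apply [IsLocalRing R] {n : Type*} [Fintype n]
    [DecidableEq n] [Nonempty n] (h2 : IsUnit (2 : R)) {Γ : Matrix n n R} (hΓ : IsUnit Γ)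
    (hH : Γ.IsHermitian) : ∃ P : Matrix n n R, IsUnit P ∧ ∃ i, IsUnit ((Pᴴ * Γ * P) i i) := by
  by_cases hdiag : ∃ i, IsUnit (Γ i i)
  · obtain ⟨i, hi⟩ := hdiag
    exact ⟨1, isUnit_one, i, by simpa using hi⟩
  push Not at hdiag
  obtain ⟨i⟩ := ‹Nonempty n›
  obtain ⟨j, hj⟩ := exists_isUnit_apply_of_isUnit hΓ i
  have hij : j ≠ i := by rintro rfl; exact hdiag j hj
  obtain ⟨b, hb⟩ := hj.exists_right_inv
  have hb' : star b * Γ j i = 1 := by rw [← hH.apply j i, ← star_mul, hb, star_one]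
  refine ⟨transvection j i b, ?_, i, ?_⟩
  · rw [isUnit_iff_isUnit_det, det_transvection_of_ne _ _ hij]
    exact isUnit_one
  have hii : Γ i i + star b * Γ j j * b ∈ maximalIdeal R :=
    add_mem ((mem_maximalIdeal _).mpr (hdiag i))
      (Ideal.mul_mem_right _ _ (Ideal.mul_mem_left _ _ ((mem_maximalIdeal _).mpr (hdiag j))))
  convert isUnit_add_of_mem_maximalIdeal h2 hii using 1
  rw [conjTranspose_transvection, Matrix.mul_assoc, transvection_mul_apply_same,
    mul_transvection_apply_same, mul_transvection_apply_same]
  linear_combination hb + hb'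

theorem exists_fromBlocks_eq_conjTranspose_mul_self {m n : Type*} [Fintype m] [DecidableEq m]
    [Unique m] [Fintype n] [DecidableEq n]
    (hnorm : ∀ a : R, IsUnit a → star a = a → ∃ c, star c * c = a)
    {Γ : Matrix (m ⊕ n) (m ⊕ n) R} (hΓ : IsUnit Γ) (hH : Γ.IsHermitian)
    (hpivot : IsUnit (Γ (.inl default) (.inl default)))
    (ih : ∀ S : Matrix n n R, IsUnit S → S.IsHermitian → ∃ h, S = hᴴ * h) :
    ∃ g, Γ = gᴴ * g := by
  obtain ⟨c, hc⟩ := hnorm _ hpivot (hH.apply _ _)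
  set a : Matrix m m R := of fun _ _ => c
  have ha : IsUnit a := by
    rw [isUnit_iff_isUnit_det, det_unique]
    exact isUnit_of_mul_isUnit_right (hc ▸ hpivot)
  have hA : Γ.toBlocks₁₁ = aᴴ * a := by
    ext i j
    simp [a, toBlocks₁₁, mul_apply, Subsingleton.elim i default, Subsingleton.elim j default, hc]
  rw [← fromBlocks_toBlocks Γ] at hΓ hH ⊢
  obtain ⟨-, hBC, -, hD⟩ := isHermitian_fromBlocks_iff.mp hH
  rw [hA, ← hBC] at hΓ ⊢
  have := (((isUnit_conjTranspose a).mpr ha).mul ha).invertible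
  have hS : IsUnit (Γ.toBlocks₂₂ - Γ.toBlocks₁₂ᴴ * (aᴴ * a)⁻¹ * Γ.toBlocks₁₂) := by
    rw [isUnit_iff_isUnit_det, ← invOf_eq_nonsing_inv]
    rw [isUnit_iff_isUnit_det, det_fromBlocks₁₁] at hΓ
    exact isUnit_of_mul_isUnit_right hΓ
  have hSH : (Γ.toBlocks₂₂ - Γ.toBlocks₁₂ᴴ * (aᴴ * a)⁻¹ * Γ.toBlocks₁₂).IsHermitian :=
    hD.sub (isHermitian_conjTranspose_mul_mul _ (isHermitian_conjTranspose_mul_self a).inv)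
  obtain ⟨h, hh⟩ := ih _ hS hSH
  exact ⟨_, fromBlocks_eq_conjTranspose_mul_self ha _ _ h hh⟩

theorem exists_eq_conjTranspose_mul_self_of_isHermitian [IsLocalRing R] (h2 : IsUnit (2 : R))
    (hnorm : ∀ a : R, IsUnit a → star a = a → ∃ c, star c * c = a)
    {n : Type*} [Fintype n] [DecidableEq n] {Γ : Matrix n n R} (hΓ : IsUnit Γ)
    (hH : Γ.IsHermitian) : ∃ g, Γ = gᴴ * g := by
  rcases isEmpty_or_nonempty n with _ | _
  · exact ⟨0, Subsingleton.elim _ _⟩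
  obtain ⟨P, hP, i, hi⟩ := exists_isUnit_conjTranspose_mul_mul_apply h2 hΓ hH
  have hΔ : IsUnit (Pᴴ * Γ * P) := ((isUnit_conjTranspose P).mpr hP |>.mul hΓ).mul hP
  have hΔH : (Pᴴ * Γ * P).IsHermitian := isHermitian_conjTranspose_mul_mul P hH
  refine exists_eq_conjTranspose_mul_self_of_conjTranspose_mul_mul hP <|
    exists_eq_conjTranspose_mul_self_of_submatrix (Equiv.sumCompl (· = i)) <|
    exists_fromBlocks_eq_conjTranspose_mul_self hnorm ?_ (hΔH.submatrix _) hi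
      fun S hS hSH => exists_eq_conjTranspose_mul_self_of_isHermitian h2 hnorm hS hSH
  rwa [isUnit_iff_isUnit_det, det_submatrix_equiv_self, ← isUnit_iff_isUnit_det]
termination_by Fintype.card n
decreasing_by exact Fintype.card_subtype_lt (p := (· ≠ i)) (x := i) (by simp)

end Matrix

/-- **Hermitian matrices over an unramified quadratic extension are of the form `g° g`.**
`O` is a complete discrete valuation ring with finite residue field of odd characteristic
(i.e. `2` is a unit), equipped with an involutive ring automorphism `σ` inducing a nontrivial
automorphism of the residue field (so that `O` is an unramified quadratic extension of the
fixed ring `o` and `σ` is the nontrivial Galois automorphism).  Writing `M° = (M.map σ)ᵀ` for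
the conjugate transpose, an invertible matrix `Γ ∈ GL_n(O)` is hermitian (`Γ° = Γ`) if and
only if there is an invertible `g` with `Γ = g° g`; in particular any `g° g` with `g`
invertible is hermitian. -/
theorem hermitian_iff_exists_conjTranspose_mul_self
    (O : Type*) [CommRing O] [IsDomain O] [IsDiscreteValuationRing O]
    [IsAdicComplete (IsLocalRing.maximalIdeal O) O]
    [Fintype (IsLocalRing.ResidueField O)]
    (h2 : IsUnit (2 : O))
    (σ : O ≃+* O) (hσ : ∀ x, σ (σ x) = x)
    (hunram : ∃ x : O, IsLocalRing.residue O (σ x) ≠ IsLocalRing.residue O x)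
    (n : ℕ) (Γ : Matrix (Fin n) (Fin n) O) (hΓ : IsUnit Γ) :
    (Γ.map σ)ᵀ = Γ ↔
      ∃ g : Matrix (Fin n) (Fin n) O, IsUnit g ∧ Γ = (g.map σ)ᵀ * g := by
  let _ : StarRing O := σ.starRingOfInvolutive hσ
  change Γᴴ = Γ ↔ ∃ g, IsUnit g ∧ Γ = gᴴ * g
  refine ⟨fun hH => ?_, fun ⟨g, _, hg⟩ => hg ▸ isHermitian_conjTranspose_mul_self g⟩
  obtain ⟨g, rfl⟩ := exists_eq_conjTranspose_mul_self_of_isHermitian h2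
    (fun _ ha hsa => exists_star_mul_self_eq h2 hunram ha hsa) hΓ hH
  refine ⟨g, ?_, rfl⟩
  rw [isUnit_iff_isUnit_det, det_mul] at hΓ
  exact (isUnit_iff_isUnit_det g).mpr (isUnit_of_mul_isUnit_right hΓ)
end

section
/- Fix n ≥ 3 (or n = 2 with 2 invertible in o) and a commutative ring o. With b_m ⊆ sl_n(o) the filtration by super-diagonals as above, for every m ∈ ℤ with m ≥ 1-n one has the equality [b_1, b_m] = b_{m+1}; moreover [b_0, sl_n(o)] = sl_n(o). -/
open Matrix

/-!
The inclusions `⊆` come from the product filtration `b_a b_c ⊆ b_{a+c}`. For `⊇`, `b_m` is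
spanned by the `E_{ij}` with `i ≠ j`, `j - i ≥ m`, together with the `E_{ii} - E_{jj}` when
`m ≤ 0`, and each of these generators is a bracket of generators: `E_{ij} = [E_{il}, E_{lj}]`
through an index `l` between them, `E_{ii} - E_{i+1,i+1} = [E_{i,i+1}, E_{i+1,i}]`, and on the
superdiagonal, where no such `l` exists, `E_{ij} = [E_{ij}, E_{jj} - E_{kk}]` for a third index
`k` (or `2 E_{ij} = [E_{ij}, E_{jj} - E_{ii}]` when `n = 2`).
-/

/-- The `o`-submodule `b_m` of `sl_n(o)`: trace-zero `n × n` matrices `(x_{ij})` with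
`x_{ij} = 0` whenever `j - i < m`.  (So `b_m = sl_n(o)` for `m ≤ 1 - n` and `b_m = 0`
for `m ≥ n`.) -/
def slnFiltration (o : Type*) [CommRing o] (n : ℕ) (m : ℤ) :
    Submodule o (Matrix (Fin n) (Fin n) o) where
  carrier := {X | Matrix.trace X = 0 ∧ ∀ i j : Fin n, (j : ℤ) - (i : ℤ) < m → X i j = 0}
  add_mem' := by
    rintro X Y ⟨hX, hX'⟩ ⟨hY, hY'⟩
    refine ⟨by rw [Matrix.trace_add, hX, hY, add_zero], fun i j h => ?_⟩
    simp [Matrix.add_apply, hX' i j h, hY' i j h]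
  zero_mem' := ⟨by simp, fun i j _ => rfl⟩
  smul_mem' := by
    rintro c X ⟨hX, hX'⟩
    exact ⟨by rw [Matrix.trace_smul, hX, smul_zero], fun i j h => by
      simp [Matrix.smul_apply, hX' i j h]⟩

def bracketSpan {R A : Type*} [Ring R] [Ring A] [Module R A] (p q : Submodule R A) :
    Submodule R A :=
  Submodule.span R {z | ∃ X ∈ p, ∃ Y ∈ q, z = X * Y - Y * X}

section bracketSpan

variable {R A : Type*} [Ring R] [Ring A] [Module R A] {p q : Submodule R A}

theorem bracket_mem_bracketSpan {X Y : A} (hX : X ∈ p) (hY : Y ∈ q) :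
    X * Y - Y * X ∈ bracketSpan p q :=
  Submodule.subset_span ⟨X, hX, Y, hY, rfl⟩

theorem bracketSpan_comm (p q : Submodule R A) : bracketSpan p q = bracketSpan q p := by
  suffices ∀ p q : Submodule R A, bracketSpan p q ≤ bracketSpan q p from
    le_antisymm (this p q) (this q p)
  intro p q
  refine Submodule.span_le.mpr ?_
  rintro _ ⟨X, hX, Y, hY, rfl⟩
  rw [← neg_sub]
  exact Submodule.neg_mem _ (bracket_mem_bracketSpan hY hX)

end bracketSpan

section slnFiltration

variable {o : Type*} [CommRing o] {n : ℕ}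

theorem single_mem_slnFiltration {m : ℤ} {i j : Fin n} (hij : i ≠ j)
    (h : m ≤ (j : ℤ) - i) : single i j (1 : o) ∈ slnFiltration o n m := by
  refine ⟨trace_single_eq_of_ne _ _ _ hij, fun a b hab => single_apply_of_ne _ _ _ _ _ ?_⟩
  rintro ⟨rfl, rfl⟩
  omega

theorem single_sub_single_mem_slnFiltration {m : ℤ} (h : m ≤ 0) (i j : Fin n) :
    single i i (1 : o) - single j j 1 ∈ slnFiltration o n m := by
  refine ⟨by simp, fun a b hab => ?_⟩
  have hdiag : ∀ k : Fin n, ¬(k = a ∧ k = b) := by rintro k ⟨rfl, rfl⟩; omega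
  rw [Matrix.sub_apply, single_apply_of_ne _ _ _ _ _ (hdiag i),
    single_apply_of_ne _ _ _ _ _ (hdiag j), sub_zero]

theorem bracket_mem_slnFiltration {a c : ℤ} {X Y : Matrix (Fin n) (Fin n) o}
    (hX : X ∈ slnFiltration o n a) (hY : Y ∈ slnFiltration o n c) :
    X * Y - Y * X ∈ slnFiltration o n (a + c) := by
  obtain ⟨-, hX⟩ := hX
  obtain ⟨-, hY⟩ := hY
  have mul_apply_eq_zero : ∀ {a c : ℤ} {X Y : Matrix (Fin n) (Fin n) o},
      (∀ i j : Fin n, (j : ℤ) - i < a → X i j = 0) →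
      (∀ i j : Fin n, (j : ℤ) - i < c → Y i j = 0) →
      ∀ i j : Fin n, (j : ℤ) - i < a + c → (X * Y) i j = 0 := by
    intro a c X Y hX hY i j hij
    rw [mul_apply]
    refine Finset.sum_eq_zero fun k _ => ?_
    by_cases hk : (k : ℤ) - i < a
    · rw [hX i k hk, zero_mul]
    · rw [hY k j (by omega), mul_zero]
  refine ⟨by rw [trace_sub, trace_mul_comm, sub_self], fun i j hij => ?_⟩
  rw [Matrix.sub_apply, mul_apply_eq_zero hX hY i j hij,
    mul_apply_eq_zero hY hX i j (by rwa [add_comm]), sub_zero]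

theorem bracketSpan_slnFiltration_le (a c : ℤ) :
    bracketSpan (slnFiltration o n a) (slnFiltration o n c) ≤ slnFiltration o n (a + c) :=
  Submodule.span_le.mpr fun _ ⟨_, hX, _, hY, hz⟩ => hz ▸ bracket_mem_slnFiltration hX hY

theorem slnFiltration_le_of_single_mem {p : Submodule o (Matrix (Fin n) (Fin n) o)} {m : ℤ}
    (hoff : ∀ i j : Fin n, i ≠ j → m ≤ (j : ℤ) - i → single i j 1 ∈ p)
    (hdiag : m ≤ 0 → ∀ i j : Fin n, single i i 1 - single j j 1 ∈ p) :
    slnFiltration o n m ≤ p := by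
  rintro X ⟨htr, hX⟩
  cases n with
  | zero => exact Subsingleton.elim X 0 ▸ p.zero_mem
  | succ n =>
  have hsum : X = ∑ i, ∑ j, X i j • (single i j 1 - if i = j then single 0 0 1 else 0) := by
    simp only [smul_sub, Finset.sum_sub_distrib, smul_ite, smul_zero, Finset.sum_ite_eq,
      Finset.mem_univ, if_true, ← Finset.sum_smul]
    rw [show ∑ i, X i i = 0 from htr, zero_smul, sub_zero]
    conv_lhs => rw [matrix_eq_sum_single X]
    simp [smul_single]
  rw [hsum]
  refine Submodule.sum_mem _ fun i _ => Submodule.sum_mem _ fun j _ => ?_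
  by_cases hx : X i j = 0
  · simp [hx]
  have hm : m ≤ (j : ℤ) - i := by by_contra h; exact hx (hX i j (by omega))
  refine Submodule.smul_mem _ _ ?_
  by_cases hij : i = j
  · subst hij
    simpa using hdiag (by omega) i 0
  · simpa [hij] using hoff i j hij hm

theorem single_sub_single_mem_of_adjacent {p : Submodule o (Matrix (Fin n) (Fin n) o)}
    (h : ∀ i j : Fin n, (j : ℕ) = i + 1 → single i i 1 - single j j 1 ∈ p) (i j : Fin n) :
    single i i 1 - single j j 1 ∈ p := by
  wlog hij : i ≤ j generalizing i j
  · rw [← neg_sub]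
    exact p.neg_mem (this j i (le_of_not_ge hij))
  obtain ⟨k, hk⟩ := Nat.exists_eq_add_of_le hij
  induction k generalizing j with
  | zero => simp [Fin.ext hk]
  | succ k ih =>
    let l : Fin n := ⟨i + k, by omega⟩
    rw [← sub_add_sub_cancel _ (single l l 1)]
    exact p.add_mem (ih l (Nat.le_add_right _ _) rfl) (h l j (by simp [l, hk]; omega))

theorem single_sub_single_mem_bracketSpan {a c : ℤ} (ha : a ≤ 1) (hc : c ≤ -1) (i j : Fin n) :
    single i i (1 : o) - single j j 1 ∈
      bracketSpan (slnFiltration o n a) (slnFiltration o n c) := by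
  refine single_sub_single_mem_of_adjacent (fun i j hj => ?_) i j
  have hij : i ≠ j := by rintro rfl; omega
  have hcomm : single i j (1 : o) * single j i 1 - single j i 1 * single i j 1
      = single i i 1 - single j j 1 := by
    rw [single_mul_single_same, single_mul_single_same, mul_one]
  rw [← hcomm]
  exact bracket_mem_bracketSpan (single_mem_slnFiltration hij (by omega))
    (single_mem_slnFiltration hij.symm (by omega))

theorem single_mem_bracketSpan_of_between {a c : ℤ} {i j l : Fin n} (hij : i ≠ j)
    (hli : l ≠ i) (hlj : l ≠ j) (ha : a ≤ (l : ℤ) - i) (hc : c ≤ (j : ℤ) - l) :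
    single i j (1 : o) ∈ bracketSpan (slnFiltration o n a) (slnFiltration o n c) := by
  have hcomm : single i l (1 : o) * single l j 1 - single l j 1 * single i l 1 = single i j 1 := by
    rw [single_mul_single_same, single_mul_single_of_ne (h := Ne.symm hij), mul_one, sub_zero]
  rw [← hcomm]
  exact bracket_mem_bracketSpan (single_mem_slnFiltration hli.symm ha)
    (single_mem_slnFiltration hlj hc)

theorem single_mem_bracketSpan_of_le_zero (hn : 3 ≤ n ∨ (n = 2 ∧ IsUnit (2 : o)))
    {a c : ℤ} {i j : Fin n} (hij : i ≠ j) (ha : a ≤ (j : ℤ) - i) (hc : c ≤ 0) :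
    single i j (1 : o) ∈ bracketSpan (slnFiltration o n a) (slnFiltration o n c) := by
  rcases hn with h3 | ⟨-, u, hu⟩
  · obtain ⟨k, hk⟩ : ({i, j}ᶜ : Finset (Fin n)).Nonempty := by
      rw [← Finset.card_pos, Finset.card_compl, Fintype.card_fin]
      have := Finset.card_le_two (a := i) (b := j)
      omega
    simp only [Finset.mem_compl, Finset.mem_insert, Finset.mem_singleton, not_or] at hk
    have hcomm : single i j (1 : o) * (single j j 1 - single k k 1)
        - (single j j 1 - single k k 1) * single i j 1 = single i j 1 := by
      rw [mul_sub, sub_mul, single_mul_single_same, single_mul_single_of_ne (h := Ne.symm hk.2),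
        single_mul_single_of_ne (h := hij.symm), single_mul_single_of_ne (h := hk.1), mul_one]
      abel
    rw [← hcomm]
    exact bracket_mem_bracketSpan (single_mem_slnFiltration hij ha)
      (single_sub_single_mem_slnFiltration hc j k)
  · have hcomm : single i j (1 : o) * (single j j 1 - single i i 1)
        - (single j j 1 - single i i 1) * single i j 1 = (2 : o) • single i j 1 := by
      rw [mul_sub, sub_mul, single_mul_single_same, single_mul_single_of_ne (h := hij.symm),
        single_mul_single_of_ne (h := hij.symm), single_mul_single_same, mul_one, two_smul]
      abel
    have hunit : single i j (1 : o) = (↑u⁻¹ : o) • (2 : o) • single i j 1 := by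
      rw [smul_smul, ← hu, u.inv_mul, one_smul]
    rw [hunit, ← hcomm]
    exact Submodule.smul_mem _ _ (bracket_mem_bracketSpan (single_mem_slnFiltration hij ha)
      (single_sub_single_mem_slnFiltration hc j i))

theorem single_mem_bracketSpan_one (hn : 3 ≤ n ∨ (n = 2 ∧ IsUnit (2 : o))) {m : ℤ}
    (hm : 1 - (n : ℤ) ≤ m) {i j : Fin n} (hij : i ≠ j) (hle : m + 1 ≤ (j : ℤ) - i) :
    single i j (1 : o) ∈ bracketSpan (slnFiltration o n 1) (slnFiltration o n m) := by
  by_cases hsucc : (j : ℤ) = i + 1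
  · exact single_mem_bracketSpan_of_le_zero hn hij (by omega) (by omega)
  by_cases hi : (i : ℕ) + 1 < n
  · exact single_mem_bracketSpan_of_between (l := ⟨i + 1, hi⟩) hij
      (by simp [Fin.ext_iff]) (by simp [Fin.ext_iff]; omega) (by simp) (by simp; omega)
  · rw [bracketSpan_comm]
    exact single_mem_bracketSpan_of_between (l := ⟨j - 1, by omega⟩) hij
      (by simp [Fin.ext_iff]; omega) (by simp [Fin.ext_iff]; omega) (by simp; omega)
      (by simp; omega)

end slnFiltration

/-- **Bracket identities for the super-diagonal filtration of `sl_n`.**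
Suppose `n ≥ 3`, or `n = 2` and `2` is invertible in `o`.  Then for every `m ≥ 1 - n`
one has `[b_1, b_m] = b_{m+1}` (as `o`-submodules, the left side being the span of
brackets), and moreover `[b_0, sl_n(o)] = sl_n(o)`, where `sl_n(o) = b_{1-n}`. -/
theorem slnFiltration_bracket
    (o : Type*) [CommRing o] (n : ℕ)
    (hn : 3 ≤ n ∨ (n = 2 ∧ IsUnit (2 : o))) :
    (∀ m : ℤ, 1 - (n : ℤ) ≤ m →
      Submodule.span o {z : Matrix (Fin n) (Fin n) o |
          ∃ X ∈ slnFiltration o n 1, ∃ Y ∈ slnFiltration o n m, z = X * Y - Y * X}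
        = slnFiltration o n (m + 1)) ∧
    Submodule.span o {z : Matrix (Fin n) (Fin n) o |
        ∃ X ∈ slnFiltration o n 0, ∃ Y ∈ slnFiltration o n (1 - (n : ℤ)), z = X * Y - Y * X}
      = slnFiltration o n (1 - (n : ℤ)) := by
  have hn2 : 2 ≤ n := by omega
  change (∀ m : ℤ, 1 - (n : ℤ) ≤ m → bracketSpan _ _ = _) ∧ bracketSpan _ _ = _
  refine ⟨fun m hm => le_antisymm ?_ ?_, le_antisymm ?_ ?_⟩
  · simpa [add_comm] using bracketSpan_slnFiltration_le (o := o) (n := n) 1 m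
  · refine slnFiltration_le_of_single_mem (fun i j hij hle => ?_) fun hm0 i j => ?_
    · exact single_mem_bracketSpan_one hn hm hij hle
    · exact single_sub_single_mem_bracketSpan le_rfl (by omega) i j
  · simpa using bracketSpan_slnFiltration_le (o := o) (n := n) 0 (1 - n)
  · refine slnFiltration_le_of_single_mem (fun i j hij hle => ?_) fun _ i j => ?_
    · rw [bracketSpan_comm]
      exact single_mem_bracketSpan_of_le_zero hn hij hle le_rfl
    · exact single_sub_single_mem_bracketSpan zero_le_one (by omega) i j
end

section
/- The Mordell–Tornheim double series Σ_{m₁,m₂ ≥ 1} 1/(m₁ m₂ (m₁ + m₂)) converges and equals 2ζ(3), where ζ is the Riemann zeta function. -/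
open Finset Filter Topology

namespace MordellAux

noncomputable def u (n : ℕ) : ℝ := 1 / ((n : ℝ) + 1)

noncomputable def H (k : ℕ) : ℝ := ∑ i ∈ Finset.range k, u i

lemma u_nonneg (n : ℕ) : 0 ≤ u n := by unfold u; positivity

lemma u_anti : ∀ m n : ℕ, m ≤ n → u n ≤ u m := by
  intro m n h
  unfold u
  gcongr


lemma telescope (d : ℕ) : HasSum (fun n : ℕ => u n - u (n + d)) (H d) := by
  rw [hasSum_iff_tendsto_nat_of_nonneg
    (fun n => sub_nonneg.mpr (u_anti n (n + d) (Nat.le_add_right _ _)))]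
  have key : ∀ N : ℕ, ∑ i ∈ range N, (u i - u (i + d)) = H d - ∑ i ∈ range d, u (N + i) := by
    intro N
    rw [Finset.sum_sub_distrib]
    have h1 : ∑ i ∈ range (d + N), u i = ∑ i ∈ range d, u i + ∑ i ∈ range N, u (d + i) :=
      Finset.sum_range_add u d N
    have h2 : ∑ i ∈ range (N + d), u i = ∑ i ∈ range N, u i + ∑ i ∈ range d, u (N + i) :=
      Finset.sum_range_add u N d
    have h3 : ∑ i ∈ range N, u (i + d) = ∑ i ∈ range N, u (d + i) := by
      apply Finset.sum_congr rfl; intro i _; rw [Nat.add_comm]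
    rw [h3]
    have : d + N = N + d := Nat.add_comm d N
    rw [this] at h1
    rw [h2] at h1
    unfold H
    linarith
  simp_rw [key]
  have htail : Tendsto (fun N : ℕ => ∑ i ∈ range d, u (N + i)) atTop (𝓝 0) := by
    have hle : ∀ N : ℕ, ∑ i ∈ range d, u (N + i) ≤ (d : ℝ) * u N := fun N =>
      calc ∑ i ∈ range d, u (N + i) ≤ ∑ _i ∈ range d, u N :=
            Finset.sum_le_sum fun i _ => u_anti N (N + i) (Nat.le_add_right _ _)
        _ = (d : ℝ) * u N := by rw [Finset.sum_const, card_range, nsmul_eq_mul]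
    have hz : Tendsto (fun N : ℕ => (d : ℝ) * u N) atTop (𝓝 0) := by
      have : Tendsto (fun N : ℕ => u N) atTop (𝓝 0) := by
        unfold u
        exact tendsto_one_div_add_atTop_nhds_zero_nat
      simpa using this.const_mul (d : ℝ)
    exact squeeze_zero (fun N => Finset.sum_nonneg fun i _ => u_nonneg _) hle hz
  simpa using (tendsto_const_nhds (x := H d)).sub htail

noncomputable def v (n : ℕ) : ℝ := 1 / (((n : ℝ) + 1) * Real.sqrt ((n : ℝ) + 1))

lemma v_nonneg (n : ℕ) : 0 ≤ v n := by
  unfold v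
  positivity

lemma summable_v : Summable v := by
  have h := Real.summable_one_div_nat_rpow.mpr (show (1:ℝ) < 3/2 by norm_num)
  have h2 := (summable_nat_add_iff 1).mpr h
  apply h2.congr
  intro n
  have hx : (0:ℝ) < (n:ℝ) + 1 := by positivity
  unfold v
  push_cast
  rw [show (3/2:ℝ) = 1 + 1/2 by norm_num, Real.rpow_add hx, Real.rpow_one,
    ← Real.sqrt_eq_rpow]

lemma summable_cube : Summable (fun k : ℕ => 1 / ((k:ℝ) + 1) ^ 3) := by
  have h := (Real.summable_one_div_nat_pow (p := 3)).mpr (by norm_num)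
  have h2 := (summable_nat_add_iff 1).mpr h
  apply h2.congr
  intro n
  push_cast
  ring

noncomputable def f (p : ℕ × ℕ) : ℝ :=
  1 / (((p.1:ℝ) + 1) * ((p.2:ℝ) + 1) * ((p.1:ℝ) + (p.2:ℝ) + 2))

noncomputable def g (p : ℕ × ℕ) : ℝ :=
  1 / (((p.1:ℝ) + 1) * ((p.1:ℝ) + (p.2:ℝ) + 2) ^ 2)

lemma f_nonneg (p : ℕ × ℕ) : 0 ≤ f p := by unfold f; positivity

lemma g_nonneg (p : ℕ × ℕ) : 0 ≤ g p := by unfold g; positivity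

lemma f_le (p : ℕ × ℕ) : f p ≤ (1/2) * (v p.1 * v p.2) := by
  obtain ⟨m, n⟩ := p
  unfold f v
  simp only
  have hm : (0:ℝ) < (m:ℝ) + 1 := by positivity
  have hn : (0:ℝ) < (n:ℝ) + 1 := by positivity
  have hsm := Real.sq_sqrt hm.le
  have hsn := Real.sq_sqrt hn.le
  have hsm' := Real.sqrt_nonneg ((m:ℝ) + 1)
  have hsn' := Real.sqrt_nonneg ((n:ℝ) + 1)
  rw [div_mul_div_comm, one_mul, mul_comm (1/2), mul_one_div, div_div]
  apply one_div_le_one_div_of_le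
  · positivity
  · nlinarith [sq_nonneg (Real.sqrt ((m:ℝ)+1) - Real.sqrt ((n:ℝ)+1)),
      mul_pos hm hn, mul_nonneg hsm' hsn']

lemma g_le_f (p : ℕ × ℕ) : g p ≤ f p := by
  obtain ⟨m, n⟩ := p
  unfold f g
  simp only
  have hm : (0:ℝ) < (m:ℝ) + 1 := by positivity
  have hn : (0:ℝ) < (n:ℝ) + 1 := by positivity
  apply one_div_le_one_div_of_le
  · positivity
  · nlinarith [mul_pos hm (show (0:ℝ) < (m:ℝ)+(n:ℝ)+2 by positivity), hm.le, hn.le]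

lemma summable_f : Summable f :=
  Summable.of_nonneg_of_le f_nonneg f_le
    (((summable_v.mul_of_nonneg summable_v v_nonneg v_nonneg)).mul_left (1/2))

lemma summable_g : Summable g := Summable.of_nonneg_of_le g_nonneg g_le_f summable_f

lemma f_eq (p : ℕ × ℕ) : f p = g p + g p.swap := by
  obtain ⟨m, n⟩ := p
  unfold f g
  simp only [Prod.swap_prod_mk]
  have hm : ((m:ℝ) + 1) ≠ 0 := by positivity
  have hn : ((n:ℝ) + 1) ≠ 0 := by positivity
  have hmn : ((m:ℝ) + (n:ℝ) + 2) ≠ 0 := by positivity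
  have hnm : ((n:ℝ) + (m:ℝ) + 2) ≠ 0 := by positivity
  field_simp
  ring

lemma row_f (m : ℕ) : HasSum (fun n => f (m, n)) (H (m+1) / ((m:ℝ) + 1) ^ 2) := by
  have h := (telescope (m+1)).div_const (((m:ℝ) + 1) ^ 2)
  refine h.congr_fun fun n => ?_
  unfold f u
  have hm : ((m:ℝ) + 1) ≠ 0 := by positivity
  have hn : ((n:ℝ) + 1) ≠ 0 := by positivity
  have hmn : ((m:ℝ) + (n:ℝ) + 2) ≠ 0 := by positivity
  have : ((n:ℝ) + (m:ℝ) + 1 + 1) ≠ 0 := by positivity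
  push_cast
  field_simp
  ring

noncomputable def G (p : ℕ × ℕ) : ℝ :=
  if p.2 < p.1 then 1 / (((p.2:ℝ) + 1) * ((p.1:ℝ) + 1) ^ 2) else 0

lemma G_nonneg (p : ℕ × ℕ) : 0 ≤ G p := by
  unfold G; split
  · positivity
  · exact le_rfl

lemma G_le (p : ℕ × ℕ) : G p ≤ v p.1 * v p.2 := by
  obtain ⟨k, m⟩ := p
  unfold G v
  simp only
  split
  · rename_i hmk
    have hm : (0:ℝ) < (m:ℝ) + 1 := by positivity
    have hk : (0:ℝ) < (k:ℝ) + 1 := by positivity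
    have hmk' : (m:ℝ) + 1 ≤ (k:ℝ) + 1 := by
      have : (m:ℕ) + 1 ≤ k + 1 := by omega
      exact_mod_cast this
    have hsm := Real.sq_sqrt hm.le
    have hsk := Real.sq_sqrt hk.le
    have hsm' := Real.sqrt_nonneg ((m:ℝ) + 1)
    have hsk' := Real.sqrt_nonneg ((k:ℝ) + 1)
    have hle : Real.sqrt ((m:ℝ) + 1) ≤ Real.sqrt ((k:ℝ) + 1) := Real.sqrt_le_sqrt hmk'
    rw [div_mul_div_comm, one_mul]
    apply one_div_le_one_div_of_le
    · positivity
    · have h1 : Real.sqrt ((k:ℝ)+1) * Real.sqrt ((m:ℝ)+1) ≤ (k:ℝ) + 1 := by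
        nlinarith [mul_le_mul_of_nonneg_left hle hsk']
      nlinarith [mul_le_mul_of_nonneg_left h1 (mul_nonneg hm.le hk.le)]
  · positivity

lemma summable_G : Summable G :=
  Summable.of_nonneg_of_le G_nonneg G_le
    (summable_v.mul_of_nonneg summable_v v_nonneg v_nonneg)

lemma G_row (k : ℕ) : ∑' m, G (k, m) = H k / ((k:ℝ) + 1) ^ 2 := by
  rw [tsum_eq_sum (s := Finset.range k)
    (fun m hm => by unfold G; exact if_neg (by simpa using hm))]
  unfold G H
  rw [Finset.sum_div]
  refine Finset.sum_congr rfl fun m hm => ?_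
  rw [if_pos (Finset.mem_range.mp hm)]
  unfold u
  rw [div_div]

lemma G_col (m : ℕ) : ∑' k, G (k, m) = ∑' n, g (m, n) := by
  have hinj : Function.Injective (fun n : ℕ => m + 1 + n) := fun a b h =>
    Nat.add_left_cancel h
  rw [← hinj.tsum_eq (f := fun k => G (k, m))]
  · refine tsum_congr fun n => ?_
    unfold G g
    rw [if_pos (by omega : m < m + 1 + n)]
    simp only
    push_cast
    ring_nf
  · intro k hk
    rw [Function.mem_support] at hk
    have hm_lt : m < k := by
      by_contra h
      exact hk (if_neg h)
    exact ⟨k - m - 1, by simp only []; omega⟩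

lemma tsum_f_eq : ∑' p, f p = 2 * ∑' k : ℕ, 1 / ((k:ℝ) + 1) ^ 3 := by
  set Z := ∑' k : ℕ, 1 / ((k:ℝ) + 1) ^ 3 with hZ
  set T := ∑' k : ℕ, H k / ((k:ℝ) + 1) ^ 2 with hTdef
  have hGsum : Summable (Function.uncurry fun k m => G (k, m)) :=
    summable_G.congr fun p => rfl
  have hT : ∑' p, g p = T := by
    rw [Summable.tsum_prod summable_g]
    have h1 : ∀ m : ℕ, ∑' n, g (m, n) = ∑' k, G (k, m) := fun m => (G_col m).symm
    calc ∑' (m) (n), g (m, n) = ∑' (m) (k), G (k, m) := tsum_congr h1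
      _ = ∑' (k) (m), G (k, m) := Summable.tsum_comm hGsum
      _ = T := tsum_congr G_row
  have hswap : Summable (fun p : ℕ × ℕ => g p.swap) :=
    ((Equiv.prodComm ℕ ℕ).summable_iff).mpr summable_g
  have hswap_eq : ∑' p : ℕ × ℕ, g p.swap = ∑' p, g p :=
    (Equiv.prodComm ℕ ℕ).tsum_eq g
  have hS2 : ∑' p, f p = 2 * T := by
    calc ∑' p, f p = ∑' p, (g p + g p.swap) := tsum_congr f_eq
      _ = ∑' p, g p + ∑' p : ℕ × ℕ, g p.swap := Summable.tsum_add summable_g hswap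
      _ = 2 * T := by rw [hswap_eq, hT]; ring
  have ha : Summable (fun k => H k / ((k:ℝ) + 1) ^ 2) := by
    have := summable_G.prod
    exact (this.congr fun k => G_row k)
  have hS1 : ∑' p, f p = T + Z := by
    rw [Summable.tsum_prod summable_f]
    have : ∀ m : ℕ, ∑' n, f (m, n) = H (m+1) / ((m:ℝ) + 1) ^ 2 :=
      fun m => (row_f m).tsum_eq
    rw [tsum_congr this, hTdef, hZ, ← Summable.tsum_add ha summable_cube]
    refine tsum_congr fun k => ?_
    have hH : H (k+1) = H k + u k := Finset.sum_range_succ u k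
    rw [hH]
    unfold u
    have hk : ((k:ℝ) + 1) ≠ 0 := by positivity
    field_simp
  linarith [hS1, hS2]

end MordellAux

/-- **Mordell's evaluation of the Mordell–Tornheim double series.**
`∑_{m₁,m₂ ≥ 1} 1/(m₁ m₂ (m₁ + m₂))` converges and equals `2 ζ(3)`. -/
theorem mordell_tornheim_eq_two_zeta_three :
    Summable (fun m : ℕ × ℕ =>
      1 / (((m.1 : ℂ) + 1) * ((m.2 : ℂ) + 1) * (((m.1 : ℂ) + 1) + ((m.2 : ℂ) + 1)))) ∧
    ∑' m : ℕ × ℕ,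
        1 / (((m.1 : ℂ) + 1) * ((m.2 : ℂ) + 1) * (((m.1 : ℂ) + 1) + ((m.2 : ℂ) + 1)))
      = 2 * riemannZeta 3 := by
  have hcast : ∀ m : ℕ × ℕ,
      (1 / (((m.1 : ℂ) + 1) * ((m.2 : ℂ) + 1) * (((m.1 : ℂ) + 1) + ((m.2 : ℂ) + 1))))
        = ((MordellAux.f m : ℝ) : ℂ) := by
    intro m
    unfold MordellAux.f
    push_cast
    ring_nf
  constructor
  · exact (Complex.summable_ofReal.mpr MordellAux.summable_f).congr
      fun m => (hcast m).symm
  · rw [tsum_congr hcast, ← Complex.ofReal_tsum, MordellAux.tsum_f_eq]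
    rw [zeta_eq_tsum_one_div_nat_add_one_cpow (by norm_num : 1 < Complex.re 3)]
    push_cast
    congr 1
    refine tsum_congr fun n => ?_
    rw [show (3:ℂ) = ((3:ℕ):ℂ) by norm_num, Complex.cpow_natCast]
end

section
/- Let o be a compact discrete valuation ring with residue field k of cardinality q > 2. For any ℓ ≥ 0 and any A ∈ gl_n(o/p^ℓ), the reduction modulo p of the Lie centralizer C_{gl_n(o)}(A) (i.e., of {X ∈ gl_n(o) : [X,A] ≡ 0 mod p^ℓ}) equals the additive span of the reduction modulo p of the group centralizer C_{GL_n(o)}(A). -/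
/-!
Since the matrix algebra over `k` is finite, some power `e = x ^ m` (`m ≠ 0`) of the reduction `x`
of `X` is idempotent: it cuts out the Fitting decomposition of `x`, with `x` invertible on the
image of `e` and nilpotent on the image of `1 - e`. For a unit `t` of `o`, the matrix
`X + t • (X ^ m - 1)` is a polynomial in `X`, so it still commutes with `A` modulo `p ^ ℓ`, and
it reduces to `x - t • (1 - e)`, which acts as `x` and `x - t` on the two summands; hence it is
invertible over the local ring `o`. As `q > 2`, there is a unit `c` with `1 + c` a unit, and
`X = (X + 1 • (X ^ m - 1)) + (X + c • (X ^ m - 1)) - (X + (1 + c) • (X ^ m - 1))`.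
-/

open Polynomial

theorem pow_add_mul_eq_pow_of_pow_add_eq {M : Type*} [Monoid M] {x : M} {i p : ℕ}
    (h : x ^ (i + p) = x ^ i) (k : ℕ) : x ^ (i + k * p) = x ^ i := by
  induction k with
  | zero => simp
  | succ k ih => rw [add_one_mul, ← add_assoc, pow_add, ih, ← pow_add, h]

theorem exists_ne_zero_isIdempotentElem_pow {M : Type*} [Monoid M] [Finite M] (x : M) :
    ∃ m ≠ 0, IsIdempotentElem (x ^ m) := by
  obtain ⟨i, j, hne, hij⟩ := Finite.exists_ne_map_eq_of_infinite (x ^ · : ℕ → M)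
  wlog hlt : i < j generalizing i j
  · exact this j i hne.symm hij.symm (by omega)
  obtain ⟨p, rfl⟩ := Nat.exists_eq_add_of_lt hlt
  have hper := pow_add_mul_eq_pow_of_pow_add_eq (p := p + 1) hij.symm
  refine ⟨(i + 1) * p + 1 + i, by omega, ?_⟩
  rw [IsIdempotentElem, ← pow_add,
    show _ + _ = (i + 1) * p + 1 + (i + (i + 1) * (p + 1)) by ring, pow_add, hper, ← pow_add]

theorem Polynomial.isUnit_aeval_of_isCoprime {R M : Type*} [CommRing R] [Ring M] [Algebra R M]
    {p q : R[X]} (hpq : IsCoprime p q) {x : M} (hq : aeval x q = 0) : IsUnit (aeval x p) := by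
  obtain ⟨u, v, h⟩ := hpq
  have h' : aeval x u * aeval x p = 1 := by
    simpa [hq] using congrArg (aeval x) h
  exact ((Commute.all u p).map (aeval x) |>.isUnit_mul_iff.mp (h' ▸ isUnit_one)).2

theorem Polynomial.isCoprime_X_add_C_mul_X_pow_sub_one {R : Type*} [CommRing R] {c : R}
    (hc : IsUnit c) {m : ℕ} (hm : m ≠ 0) :
    IsCoprime (X + C c * (X ^ m - 1)) (X ^ m * (X ^ m - 1)) := by
  obtain ⟨m, rfl⟩ := Nat.exists_eq_add_one_of_ne_zero hm
  refine .mul_right (.pow_right ?_) ?_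
  · have : X + C c * (X ^ (m + 1) - 1) = -C c + (1 + C c * X ^ m) * X := by ring
    rw [this, IsCoprime.add_mul_right_left_iff, IsCoprime.neg_left_iff]
    simpa using (isCoprime_mul_unit_left_left (hc.map C) 1 X).mpr isCoprime_one_left
  · rw [IsCoprime.add_mul_right_left_iff]
    exact ⟨X ^ m, -1, by ring⟩

theorem isUnit_add_smul_pow_sub_one {R M : Type*} [CommRing R] [Ring M] [Algebra R M]
    {x : M} {m : ℕ} (hm : m ≠ 0) (hx : IsIdempotentElem (x ^ m)) {c : R} (hc : IsUnit c) :
    IsUnit (x + c • (x ^ m - 1)) := by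
  simpa [Algebra.smul_def] using
    isUnit_aeval_of_isCoprime (isCoprime_X_add_C_mul_X_pow_sub_one hc hm) (x := x)
      (by simp [mul_sub, hx.eq])

namespace Subalgebra

variable {R M N : Type*} [CommRing R] [Ring M] [Ring N] [Algebra R M] [Algebra R N] [Finite N]
  (S : Subalgebra R M) {c : R}

theorem mem_addSubgroupClosure_isUnit (φ : M →ₐ[R] N) [IsLocalHom φ] (hc : IsUnit c)
    (hc₁ : IsUnit (1 + c)) {x : M} (hx : x ∈ S) :
    x ∈ AddSubgroup.closure {g | g ∈ S ∧ IsUnit g} := by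
  obtain ⟨m, hm, he⟩ := exists_ne_zero_isIdempotentElem_pow (φ x)
  have mem : ∀ {t : R}, IsUnit t →
      x + t • (x ^ m - 1) ∈ AddSubgroup.closure {g | g ∈ S ∧ IsUnit g} := fun ht =>
    AddSubgroup.subset_closure
      ⟨add_mem hx (S.smul_mem (sub_mem (pow_mem hx m) S.one_mem) _),
        IsUnit.of_map φ _ (by simpa using isUnit_add_smul_pow_sub_one hm he ht)⟩
  have decomp : x = (x + (1 : R) • (x ^ m - 1)) + (x + c • (x ^ m - 1))
      - (x + (1 + c) • (x ^ m - 1)) := by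
    module
  rw [decomp]
  exact sub_mem (add_mem (mem isUnit_one) (mem hc)) (mem hc₁)

theorem coe_map_eq_addSubgroupClosure_image_isUnit (φ : M →ₐ[R] N) [IsLocalHom φ]
    (hc : IsUnit c) (hc₁ : IsUnit (1 + c)) :
    (S.map φ : Set N) = AddSubgroup.closure (φ '' {g | g ∈ S ∧ IsUnit g}) := by
  apply subset_antisymm
  · rintro _ ⟨x, hx, rfl⟩
    rw [show ⇑φ = ⇑(φ : M →+ N) from rfl, ← AddMonoidHom.map_closure]
    exact AddSubgroup.mem_map_of_mem _ (S.mem_addSubgroupClosure_isUnit φ hc hc₁ hx)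
  · refine (AddSubgroup.closure_le (S.map φ).toSubring.toAddSubgroup).mpr ?_
    rintro _ ⟨g, ⟨hg, -⟩, rfl⟩
    exact ⟨g, hg, rfl⟩

end Subalgebra

theorem RingHom.isLocalHom_mapMatrix {n R S : Type*} [Fintype n] [DecidableEq n] [CommRing R]
    [CommRing S] (f : R →+* S) [IsLocalHom f] :
    IsLocalHom (f.mapMatrix : Matrix n n R →+* Matrix n n S) :=
  ⟨fun A hA => by
    rw [Matrix.isUnit_iff_isUnit_det] at hA ⊢
    exact IsUnit.of_map f _ (by rwa [RingHom.map_det])⟩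

theorem IsLocalRing.exists_isUnit_and_isUnit_one_add (R : Type*) [CommRing R] [IsLocalRing R]
    [Fintype (ResidueField R)] (h : 2 < Fintype.card (ResidueField R)) :
    ∃ c : R, IsUnit c ∧ IsUnit (1 + c) := by
  classical
  obtain ⟨c, -, hc⟩ := Finset.exists_mem_notMem_of_card_lt_card (s := {0, -1})
    (t := Finset.univ) (Finset.card_le_two.trans_lt h)
  obtain ⟨c, rfl⟩ := residue_surjective c
  simp only [Finset.mem_insert, Finset.mem_singleton, not_or] at hc
  refine ⟨c, (residue_ne_zero_iff_isUnit c).mp hc.1, (residue_ne_zero_iff_isUnit _).mp ?_⟩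
  rw [map_add, map_one]
  exact fun h => hc.2 (eq_neg_of_add_eq_zero_right h)

theorem lie_shadow_eq_addSpan_group_shadow_general
    (o : Type*) [CommRing o] [IsDomain o] [IsDiscreteValuationRing o]
    [Fintype (IsLocalRing.ResidueField o)]
    (hq : 2 < Fintype.card (IsLocalRing.ResidueField o))
    (n ℓ : ℕ)
    (A : Matrix (Fin n) (Fin n) (o ⧸ IsLocalRing.maximalIdeal o ^ ℓ)) :
    {Y : Matrix (Fin n) (Fin n) (IsLocalRing.ResidueField o) |
        ∃ X : Matrix (Fin n) (Fin n) o,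
          X.map (Ideal.Quotient.mk (IsLocalRing.maximalIdeal o ^ ℓ)) * A
            = A * X.map (Ideal.Quotient.mk (IsLocalRing.maximalIdeal o ^ ℓ)) ∧
          Y = X.map (IsLocalRing.residue o)}
      = ↑(AddSubgroup.closure
          {Y : Matrix (Fin n) (Fin n) (IsLocalRing.ResidueField o) |
            ∃ g : Matrix (Fin n) (Fin n) o, IsUnit g ∧
              g.map (Ideal.Quotient.mk (IsLocalRing.maximalIdeal o ^ ℓ)) * A
                = A * g.map (Ideal.Quotient.mk (IsLocalRing.maximalIdeal o ^ ℓ)) ∧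
              Y = g.map (IsLocalRing.residue o)}) := by
  obtain ⟨c, hc, hc₁⟩ := IsLocalRing.exists_isUnit_and_isUnit_one_add o hq
  let φ : Matrix (Fin n) (Fin n) o →ₐ[o] Matrix (Fin n) (Fin n) (IsLocalRing.ResidueField o) :=
    (Algebra.ofId o _).mapMatrix
  have hφ : ∀ X, φ X = X.map (IsLocalRing.residue o) := fun _ => rfl
  have : IsLocalHom φ :=
    ⟨(RingHom.isLocalHom_mapMatrix (IsLocalRing.residue o)).map_nonunit⟩
  let S : Subalgebra o (Matrix (Fin n) (Fin n) o) := (Subalgebra.centralizer o {A}).comap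
    (Ideal.Quotient.mkₐ o (IsLocalRing.maximalIdeal o ^ ℓ)).mapMatrix
  convert S.coe_map_eq_addSubgroupClosure_image_isUnit φ hc hc₁ using 3 <;> ext <;>
    simp [S, hφ, Set.mem_centralizer_iff, Subalgebra.mem_centralizer_iff, eq_comm, and_comm,
      and_left_comm]

/-- **The Lie centralizer shadow is the additive span of the group centralizer shadow.**
Let `o` be a complete discrete valuation ring with finite residue field `k` of cardinality
`q > 2`.  For any `ℓ ≥ 0` and any `A ∈ gl_n(o/p^ℓ)`, the reduction modulo `p` of the Lie
centralizer `{X ∈ gl_n(o) : [X, A] ≡ 0 mod p^ℓ}` equals the additive span of the reduction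
modulo `p` of the group centralizer `{g ∈ GL_n(o) : g A g⁻¹ = A in gl_n(o/p^ℓ)}`. -/
theorem lie_shadow_eq_addSpan_group_shadow
    (o : Type*) [CommRing o] [IsDomain o] [IsDiscreteValuationRing o]
    [IsAdicComplete (IsLocalRing.maximalIdeal o) o]
    [Fintype (IsLocalRing.ResidueField o)]
    (hq : 2 < Fintype.card (IsLocalRing.ResidueField o))
    (n ℓ : ℕ)
    (A : Matrix (Fin n) (Fin n) (o ⧸ IsLocalRing.maximalIdeal o ^ ℓ)) :
    {Y : Matrix (Fin n) (Fin n) (IsLocalRing.ResidueField o) |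
        ∃ X : Matrix (Fin n) (Fin n) o,
          X.map (Ideal.Quotient.mk (IsLocalRing.maximalIdeal o ^ ℓ)) * A
            = A * X.map (Ideal.Quotient.mk (IsLocalRing.maximalIdeal o ^ ℓ)) ∧
          Y = X.map (IsLocalRing.residue o)}
      = ↑(AddSubgroup.closure
          {Y : Matrix (Fin n) (Fin n) (IsLocalRing.ResidueField o) |
            ∃ g : Matrix (Fin n) (Fin n) o, IsUnit g ∧
              g.map (Ideal.Quotient.mk (IsLocalRing.maximalIdeal o ^ ℓ)) * A
                = A * g.map (Ideal.Quotient.mk (IsLocalRing.maximalIdeal o ^ ℓ)) ∧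
              Y = g.map (IsLocalRing.residue o)}) :=
  lie_shadow_eq_addSpan_group_shadow_general o hq n ℓ A
end
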